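/- In the exterior complex (E, d) as above, the elements l := h_{1,2}h_{2,1}h_{3,0} and l' := h_{1,0}h_{2,2}h_{3,1} are cocycles: d(l) = 0 and d(l') = 0. -/

import Mathlib

/-- The exterior algebra over `ZMod p` on nine degree-one generators `h i j`,
`i ∈ {1,2,3}`, `j ∈ ZMod 3`. -/
abbrev E (p : ℕ) : Type := ExteriorAlgebra (ZMod p) ((Fin 3 × ZMod 3) → ZMod p)

/-- The generator `h_{i,j}` (for `i ∈ {1,2,3}`). -/
noncomputable def h (p : ℕ) (i : ℕ) (j : ZMod 3) : E p :=
  ExteriorAlgebra.ι (ZMod p) (Pi.single (Fin.ofNat 3 (i - 1 : ℕ), j) 1)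

/-! Expanding `d` by the Leibniz rule, each of the three resulting monomials contains some
generator twice, because the indices of `l` and `l'` are of the form `(a, a + 2, a + 1)`;
anticommutation of the generators then kills every term. -/

section Anticomm

variable {R : Type*} [Ring R] {a b c : R}

theorem mul_mul_self_eq_zero_of_anticomm (ha : a * a = 0) (hab : a * b = -(b * a)) :
    a * b * a = 0 := by
  rw [hab, neg_mul, mul_assoc, ha, mul_zero, neg_zero]

theorem mul_mul_mul_self_eq_zero_of_anticomm (ha : a * a = 0) (hab : a * b = -(b * a))
    (hac : a * c = -(c * a)) : a * b * c * a = 0 := by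
  have hca : c * a = -(a * c) := by rw [hac, neg_neg]
  rw [mul_assoc, hca, mul_neg, ← mul_assoc, mul_mul_self_eq_zero_of_anticomm ha hab, zero_mul,
    neg_zero]

end Anticomm

theorem h_mul_self (p i : ℕ) (j : ZMod 3) : h p i j * h p i j = 0 :=
  ExteriorAlgebra.ι_sq_zero _

theorem h_mul_h_anticomm (p i k : ℕ) (j l : ZMod 3) :
    h p i j * h p k l = -(h p k l * h p i j) :=
  eq_neg_of_add_eq_zero_left (ExteriorAlgebra.ι_add_mul_swap _ _)

theorem h_mul_mul_h_eq_zero (p i k : ℕ) (j l : ZMod 3) :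
    h p i j * h p k l * h p i j = 0 :=
  mul_mul_self_eq_zero_of_anticomm (h_mul_self ..) (h_mul_h_anticomm ..)

theorem h_mul_mul_mul_h_eq_zero (p i k m : ℕ) (j l n : ZMod 3) :
    h p i j * h p k l * h p m n * h p i j = 0 :=
  mul_mul_mul_self_eq_zero_of_anticomm (h_mul_self ..) (h_mul_h_anticomm ..) (h_mul_h_anticomm ..)

section Differential

variable {p : ℕ} {d : E p →ₗ[ZMod p] E p}
  (hd1 : ∀ j : ZMod 3, d (h p 1 j) = 0)
  (hd2 : ∀ j : ZMod 3, d (h p 2 j) = h p 1 j * h p 1 (j + 1))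
  (hd3 : ∀ j : ZMod 3, d (h p 3 j) = h p 1 j * h p 2 (j + 1) + h p 2 j * h p 1 (j + 2))
  (hleib : ∀ i ∈ ({1, 2, 3} : Set ℕ), ∀ (j : ZMod 3) (y : E p),
    d (h p i j * y) = d (h p i j) * y - h p i j * d y)
include hd1 hd2 hd3 hleib

theorem d_h_one_mul_h_two_mul_h_three (a b c : ZMod 3) :
    d (h p 1 a * (h p 2 b * h p 3 c)) =
      -(h p 1 a * h p 1 b * h p 1 (b + 1) * h p 3 c) +
        h p 1 a * h p 2 b * h p 1 c * h p 2 (c + 1) +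
        h p 1 a * h p 2 b * h p 2 c * h p 1 (c + 2) := by
  rw [hleib 1 (by simp), hleib 2 (by simp), hd1, hd2, hd3]
  noncomm_ring

theorem d_h_one_mul_h_two_mul_h_three_eq_zero (a : ZMod 3) :
    d (h p 1 a * (h p 2 (a + 2) * h p 3 (a + 1))) = 0 := by
  have h₁ : a + 2 + 1 = a := by revert a; decide
  have h₂ : a + 1 + 1 = a + 2 := by revert a; decide
  have h₃ : a + 1 + 2 = a := by revert a; decide
  have hmid : h p 1 a * h p 2 (a + 2) * h p 1 (a + 1) * h p 2 (a + 2) = 0 := by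
    rw [mul_assoc (h p 1 a), mul_assoc (h p 1 a), h_mul_mul_h_eq_zero, mul_zero]
  rw [d_h_one_mul_h_two_mul_h_three hd1 hd2 hd3 hleib, h₁, h₂, h₃, h_mul_mul_h_eq_zero, hmid,
    h_mul_mul_mul_h_eq_zero, zero_mul, neg_zero, add_zero, add_zero]

end Differential

theorem l_l1_cocycles_general (p : ℕ)
    (d : E p →ₗ[ZMod p] E p)
    (hd1 : ∀ j : ZMod 3, d (h p 1 j) = 0)
    (hd2 : ∀ j : ZMod 3, d (h p 2 j) = h p 1 j * h p 1 (j + 1))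
    (hd3 : ∀ j : ZMod 3, d (h p 3 j) = h p 1 j * h p 2 (j + 1) + h p 2 j * h p 1 (j + 2))
    (hleib : ∀ i ∈ ({1, 2, 3} : Set ℕ), ∀ (j : ZMod 3) (y : E p),
      d (h p i j * y) = d (h p i j) * y - h p i j * d y)
    :
    d (h p 1 2 * (h p 2 1 * h p 3 0)) = 0 ∧ d (h p 1 0 * (h p 2 2 * h p 3 1)) = 0 :=
  ⟨d_h_one_mul_h_two_mul_h_three_eq_zero hd1 hd2 hd3 hleib 2,
    d_h_one_mul_h_two_mul_h_three_eq_zero hd1 hd2 hd3 hleib 0⟩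

theorem l_l1_cocycles (p : ℕ) (hp : p.Prime) (hodd : Odd p)
    (d : E p →ₗ[ZMod p] E p)
    (hd0 : d 1 = 0)
    (hd1 : ∀ j : ZMod 3, d (h p 1 j) = 0)
    (hd2 : ∀ j : ZMod 3, d (h p 2 j) = h p 1 j * h p 1 (j + 1))
    (hd3 : ∀ j : ZMod 3, d (h p 3 j) = h p 1 j * h p 2 (j + 1) + h p 2 j * h p 1 (j + 2))
    (hleib : ∀ i ∈ ({1, 2, 3} : Set ℕ), ∀ (j : ZMod 3) (y : E p),
      d (h p i j * y) = d (h p i j) * y - h p i j * d y)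
    :
    d (h p 1 2 * (h p 2 1 * h p 3 0)) = 0 ∧ d (h p 1 0 * (h p 2 2 * h p 3 1)) = 0 :=
  l_l1_cocycles_general p d hd1 hd2 hd3 hleib
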